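/- In the monopoly setting, every revenue-maximizing partition π satisfies SW(π) ≥ (p^1 + p^2)/(3·|G|). -/

import Mathlib

open Finset

variable {B G S : Type*} [Fintype B] [Fintype G] [Fintype S]
variable [DecidableEq B] [DecidableEq G] [DecidableEq S]

/-- `v_b(Ḡ)`: buyer `b`'s total valuation of the variants in `Ḡ`. -/
def vsum (v : B → G → ℕ) (b : B) (Gb : Finset G) : ℕ := ∑ g ∈ Gb, v b g

/-- `V̄1(B̄,Ḡ)`: the largest value among `(v_b(Ḡ))_{b∈B̄}` (`0` if `B̄ = ∅`). -/
def V1 (v : B → G → ℕ) (Bb : Finset B) (Gb : Finset G) : ℕ :=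
  Bb.sup (fun b => vsum v b Gb)

/-- `V̄2(B̄,Ḡ)`: the second-largest value, counted with multiplicity
(`0` if `|B̄| ≤ 1`).  It equals the minimum, over removal of one buyer,
of the maximum over the remaining buyers. -/
def V2 (v : B → G → ℕ) (Bb : Finset B) (Gb : Finset G) : ℕ :=
  if h : Bb.Nonempty then Bb.inf' h (fun b => V1 v (Bb.erase b) Gb) else 0

/-- The set of buyers choosing seller `s` under the assignment `σ`. -/
def buyersOf (σ : B → S) (s : S) : Finset B := univ.filter (fun b => σ b = s)

/-- Buyer `b`'s utility in the multi-seller game. -/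
def ubuyer (v : B → G → ℕ) (τ : S → Finpartition (univ : Finset G)) (σ : B → S) (b : B) : ℚ :=
  (Fintype.card G : ℚ)⁻¹ *
    ∑ Gb ∈ (τ (σ b)).parts, max ((vsum v b Gb : ℚ) - (V2 v (buyersOf σ (σ b)) Gb : ℚ)) 0

/-- Seller `s`'s utility in the multi-seller game. -/
def useller (v : B → G → ℕ) (τ : S → Finpartition (univ : Finset G)) (σ : B → S) (s : S) : ℚ :=
  (Fintype.card G : ℚ)⁻¹ * ∑ Gb ∈ (τ s).parts, (V2 v (buyersOf σ s) Gb : ℚ)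

/-- Social welfare in the multi-seller game. -/
def SWm (v : B → G → ℕ) (τ : S → Finpartition (univ : Finset G)) (σ : B → S) : ℚ :=
  ((Fintype.card S : ℚ) * (Fintype.card G : ℚ))⁻¹ *
    ∑ s : S, ∑ Gb ∈ (τ s).parts, (V1 v (buyersOf σ s) Gb : ℚ)

/-- Social welfare in the single-seller (monopoly) game. -/
def SW1 (v : B → G → ℕ) (π : Finpartition (univ : Finset G)) : ℚ :=
  (Fintype.card G : ℚ)⁻¹ * ∑ Gb ∈ π.parts, (V1 v (univ : Finset B) Gb : ℚ)

/-- The monopolist's revenue. -/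
def rev1 (v : B → G → ℕ) (π : Finpartition (univ : Finset G)) : ℚ :=
  (Fintype.card G : ℚ)⁻¹ * ∑ Gb ∈ π.parts, (V2 v (univ : Finset B) Gb : ℚ)

/-- Buyer `b`'s utility in the monopoly game. -/
def ub1 (v : B → G → ℕ) (π : Finpartition (univ : Finset G)) (b : B) : ℚ :=
  (Fintype.card G : ℚ)⁻¹ *
    ∑ Gb ∈ π.parts, max ((vsum v b Gb : ℚ) - (V2 v (univ : Finset B) Gb : ℚ)) 0

/-- `π` refines `π̂`: every block of `π̂` is a union of blocks of `π`. -/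
def IsRefinement (π πhat : Finpartition (univ : Finset G)) : Prop :=
  ∀ t ∈ πhat.parts, ∃ P ⊆ π.parts, t = P.sup id

/-- `σ` is a (pure) Nash equilibrium of the buyers' subgame induced by `τ`. -/
def IsNash (v : B → G → ℕ) (τ : S → Finpartition (univ : Finset G)) (σ : B → S) : Prop :=
  ∀ (b : B) (s : S), ubuyer v τ (Function.update σ b s) b ≤ ubuyer v τ σ b

/-- `p^i(G)`: the number of goods demanded by at least `i` buyers. -/
def pdem (v : B → G → ℕ) (i : ℕ) : ℕ :=
  (univ.filter (fun g : G => i ≤ ∑ b : B, v b g)).card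

/-- The trivial (indiscrete) partition `{G}`, which discloses nothing. -/
def trivPart (G : Type*) [Fintype G] [DecidableEq G] [Nonempty G] :
    Finpartition (univ : Finset G) :=
  Finpartition.indiscrete Finset.univ_nonempty.ne_empty

/-- `(π, f)` is a pure subgame perfect equilibrium of the two-stage game. -/
def IsSPE (v : B → G → ℕ) (π : S → Finpartition (univ : Finset G))
    (f : (S → Finpartition (univ : Finset G)) → (B → S)) : Prop :=
  (∀ τ, IsNash v τ (f τ)) ∧
  ∀ (s : S) (ρ : Finpartition (univ : Finset G)),
    useller v (Function.update π s ρ) (f (Function.update π s ρ)) s ≤ useller v π (f π) s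

/-! Let `M` be the goods demanded by at least two buyers and `D` those demanded by exactly one,
so that `p¹ + p² = 2|M| + |D|`, and let `T = |G| · SW(π)`. Since `V̄2 ≤ V̄1` and `π` maximizes
revenue, `T` bounds `|G|` times the revenue of every partition; it also bounds `v_b(G)` for every
buyer `b`. Greedily pair goods of `D` wanted by different buyers until the unpaired ones are all
wanted by a single buyer `c`: with `k` pairs, `|D| ≤ 2k + v_c(G)`. Selling the goods of `M` as
singletons and the pairs as bundles, each with second-highest value at least `1`, earns
`|M| + k ≤ T`, hence `2|M| + |D| ≤ 2(|M| + k) + v_c(G) ≤ 3T`. -/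

namespace Finpartition

variable {α : Type*} [DecidableEq α]

theorem exists_subset_parts {s : Finset α} {Q : Finset (Finset α)}
    (hQ : (Q : Set (Finset α)).PairwiseDisjoint id) (hQs : Q.sup id ⊆ s) (hempty : ∅ ∉ Q) :
    ∃ ρ : Finpartition s, Q ⊆ ρ.parts := by
  refine ⟨(ofPairwiseDisjoint Q hQ).extendOfLE hQs, fun q hq => parts_subset_extendOfLE _ hQs ?_⟩
  rw [ofPairwiseDisjoint_parts]
  exact mem_erase.2 ⟨ne_of_mem_of_not_mem hq hempty, hq⟩

end Finpartition

namespace Finset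

variable {α β : Type*} [DecidableEq α] [DecidableEq β]

theorem exists_bichromatic_pairs [Nonempty β] (w : α → β) (D : Finset α) :
    ∃ P : Finset (Finset α), (P : Set (Finset α)).PairwiseDisjoint id ∧
      (∀ p ∈ P, p ⊆ D ∧ ∃ x ∈ p, ∃ y ∈ p, w x ≠ w y) ∧
      ∃ c, #D ≤ 2 * #P + #{g ∈ D | w g = c} := by
  induction D using Finset.strongInduction with
  | H D ih =>
  by_cases hbi : ∃ x ∈ D, ∃ y ∈ D, w x ≠ w y
  · obtain ⟨x, hx, y, hy, hxy⟩ := hbi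
    have hyx : y ∈ D.erase x := mem_erase.2 ⟨fun h => hxy (congrArg w h.symm), hy⟩
    set D' := (D.erase x).erase y
    have hD'D : D' ⊆ D := (erase_subset _ _).trans (erase_subset _ _)
    have hx' : x ∉ D' := fun h => notMem_erase x D (mem_of_mem_erase h)
    have hy' : y ∉ D' := notMem_erase y _
    obtain ⟨P, hdisj, hP, c, hc⟩ :=
      ih D' (ssubset_of_subset_of_ne hD'D (ne_of_mem_of_not_mem' hx hx').symm)
    have hxyP : ∀ p ∈ P, Disjoint {x, y} p := fun p hp => by
      simpa [disjoint_insert_left] using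
        ⟨fun h => hx' ((hP p hp).1 h), fun h => hy' ((hP p hp).1 h)⟩
    refine ⟨insert {x, y} P, ?_, ?_, c, ?_⟩
    · rw [coe_insert]
      exact hdisj.insert fun p hp _ => hxyP p hp
    · rintro p hp
      rcases mem_insert.1 hp with rfl | hp
      · exact ⟨by simp [insert_subset_iff, hx, hy], x, by simp, y, by simp, hxy⟩
      · exact ⟨(hP p hp).1.trans hD'D, (hP p hp).2⟩
    · have hnew : ({x, y} : Finset α) ∉ P := fun h =>
        hx' ((hP _ h).1 (mem_insert_self x {y}))
      have hcard : #D = #D' + 2 := by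
        rw [← card_erase_add_one hx, ← card_erase_add_one hyx]
      have hfilter := card_le_card (filter_subset_filter (fun g => w g = c) hD'D)
      rw [card_insert_of_notMem hnew]
      omega
  · push Not at hbi
    refine ⟨∅, by simp, by simp, ?_⟩
    rcases D.eq_empty_or_nonempty with rfl | ⟨x, hx⟩
    · exact ⟨Classical.arbitrary β, by simp⟩
    · exact ⟨w x, by rw [filter_true_of_mem fun g hg => hbi g hg x hx]; simp⟩

end Finset

omit [Fintype B] [Fintype G] [DecidableEq G] in
theorem V2_le_V1 (v : B → G → ℕ) (Bb : Finset B) (Gb : Finset G) : V2 v Bb Gb ≤ V1 v Bb Gb := by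
  unfold V2
  split_ifs with h
  · obtain ⟨b, hb⟩ := h
    exact (inf'_le _ hb).trans (sup_mono (erase_subset _ _))
  · exact Nat.zero_le _

omit [Fintype B] [Fintype G] [DecidableEq G] in
theorem le_V2_of_ne {v : B → G → ℕ} {Bb : Finset B} {Gb : Finset G} {b₁ b₂ : B} {k : ℕ}
    (h₁ : b₁ ∈ Bb) (h₂ : b₂ ∈ Bb) (hne : b₁ ≠ b₂)
    (hk₁ : k ≤ vsum v b₁ Gb) (hk₂ : k ≤ vsum v b₂ Gb) : k ≤ V2 v Bb Gb := by
  rw [V2, dif_pos ⟨b₁, h₁⟩]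
  refine le_inf' _ _ fun b _ => ?_
  by_cases hb : b = b₁
  · subst hb
    exact hk₂.trans (le_sup (f := fun b => vsum v b Gb) (mem_erase.2 ⟨hne.symm, h₂⟩))
  · exact hk₁.trans (le_sup (f := fun b => vsum v b Gb) (mem_erase.2 ⟨Ne.symm hb, h₁⟩))

omit [Fintype B] [Fintype G] [DecidableEq B] [DecidableEq G] in
theorem one_le_vsum {v : B → G → ℕ} {b : B} {g : G} {C : Finset G} (hg : g ∈ C)
    (hv : v b g ≠ 0) : 1 ≤ vsum v b C :=
  (Nat.one_le_iff_ne_zero.2 hv).trans (single_le_sum (fun _ _ => Nat.zero_le _) hg)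

omit [Fintype B] [Fintype G] [DecidableEq B] in
theorem vsum_le_sum_V1 (v : B → G → ℕ) {Bb : Finset B} {b : B} (hb : b ∈ Bb) {s : Finset G}
    (π : Finpartition s) : vsum v b s ≤ ∑ C ∈ π.parts, V1 v Bb C := by
  calc vsum v b s = ∑ C ∈ π.parts, vsum v b C := by
        have h := sum_biUnion (f := v b) π.supIndep.pairwiseDisjoint
        rwa [π.biUnion_parts] at h
    _ ≤ ∑ C ∈ π.parts, V1 v Bb C := sum_le_sum fun C _ => le_sup (f := fun b => vsum v b C) hb

omit [Fintype G] [DecidableEq G] in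
theorem one_le_V2_singleton {v : B → G → ℕ} (hv : ∀ b g, v b g ≤ 1) {g : G}
    (hg : 2 ≤ ∑ b, v b g) : 1 ≤ V2 v univ {g} := by
  have hcard : 1 < #{b | v b g ≠ 0} := by
    calc 1 < ∑ b, v b g := hg
      _ = ∑ b ∈ {b | v b g ≠ 0}, v b g := (sum_filter_ne_zero _).symm
      _ ≤ #{b | v b g ≠ 0} := by simpa using sum_le_card_nsmul _ _ 1 fun b _ => hv b g
  obtain ⟨b₁, h₁, b₂, h₂, hne⟩ := one_lt_card.1 hcard
  exact le_V2_of_ne (mem_univ b₁) (mem_univ b₂) hne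
    (one_le_vsum (mem_singleton_self g) (mem_filter.1 h₁).2)
    (one_le_vsum (mem_singleton_self g) (mem_filter.1 h₂).2)

theorem exists_pdem_two_add_card_le_sum_V2 {v : B → G → ℕ} (hv : ∀ b g, v b g ≤ 1)
    {P : Finset (Finset G)} (hdisj : (P : Set (Finset G)).PairwiseDisjoint id)
    (hP : ∀ p ∈ P, ∀ g ∈ p, ∑ b, v b g < 2) (hV2 : ∀ p ∈ P, 1 ≤ V2 v univ p) :
    ∃ ρ : Finpartition (univ : Finset G), pdem v 2 + #P ≤ ∑ C ∈ ρ.parts, V2 v univ C := by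
  set M : Finset G := {g | 2 ≤ ∑ b, v b g}
  have hMP : ∀ g ∈ M, ∀ p ∈ P, g ∉ p := fun g hg p hp hgp =>
    (hP p hp g hgp).not_ge (mem_filter.1 hg).2
  have hdisjMP : Disjoint (M.image singleton) P := by
    refine disjoint_left.2 fun q hq hqP => ?_
    obtain ⟨g, hg, rfl⟩ := mem_image.1 hq
    exact hMP g hg _ hqP (mem_singleton_self g)
  have hQ : ((M.image singleton ∪ P : Finset (Finset G)) : Set (Finset G)).PairwiseDisjoint id := by
    rw [coe_union]
    refine .union ?_ hdisj ?_
    · rw [coe_image]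
      exact (pairwiseDisjoint_range_singleton.subset (Set.image_subset_range _ _))
    · rintro _ hq p hp -
      obtain ⟨g, hg, rfl⟩ := mem_image.1 hq
      exact disjoint_singleton_left.2 (hMP g hg p hp)
  have hempty : ∅ ∉ M.image singleton ∪ P := by
    simp only [mem_union, mem_image, singleton_ne_empty, and_false, exists_false, false_or]
    intro h
    simpa [V1, vsum] using (hV2 ∅ h).trans (V2_le_V1 v univ ∅)
  obtain ⟨ρ, hρ⟩ := Finpartition.exists_subset_parts hQ (subset_univ _) hempty
  refine ⟨ρ, ?_⟩
  calc pdem v 2 + #P = #(M.image singleton ∪ P) := by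
        rw [card_union_of_disjoint hdisjMP, card_image_of_injective _ singleton_injective]; rfl
    _ ≤ ∑ q ∈ M.image singleton ∪ P, V2 v univ q := by
        rw [card_eq_sum_ones]
        refine sum_le_sum fun q hq => ?_
        rcases mem_union.1 hq with hq | hq
        · obtain ⟨g, hg, rfl⟩ := mem_image.1 hq
          exact one_le_V2_singleton hv (mem_filter.1 hg).2
        · exact hV2 q hq
    _ ≤ ∑ C ∈ ρ.parts, V2 v univ C := sum_le_sum_of_subset hρ

theorem pdem_one_add_pdem_two_le [Nonempty B] {v : B → G → ℕ} (hv : ∀ b g, v b g ≤ 1) {T : ℕ}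
    (hrev : ∀ ρ : Finpartition (univ : Finset G), ∑ C ∈ ρ.parts, V2 v univ C ≤ T)
    (hval : ∀ b, vsum v b univ ≤ T) :
    pdem v 1 + pdem v 2 ≤ 3 * T := by
  set D : Finset G := {g | ∑ b, v b g = 1}
  have hpdem : pdem v 1 = pdem v 2 + #D := by
    rw [pdem, ← card_filter_add_card_filter_not (fun g => 2 ≤ ∑ b, v b g),
      filter_filter, filter_filter, pdem]
    congr 2 <;> ext g <;> simp only [mem_filter, mem_univ, true_and, D] <;> omega
  have hbuyer : ∀ g ∈ D, ∃ b, v b g ≠ 0 := fun g hg => by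
    have hsum : ∑ b, v b g ≠ 0 := by rw [(mem_filter.1 hg).2]; exact one_ne_zero
    obtain ⟨b, -, hb⟩ := exists_ne_zero_of_sum_ne_zero hsum
    exact ⟨b, hb⟩
  choose! w hw using hbuyer
  obtain ⟨P, hdisj, hP, c, hc⟩ := exists_bichromatic_pairs w D
  have hcT : #{g ∈ D | w g = c} ≤ T := by
    refine le_trans ?_ (hval c)
    calc #{g ∈ D | w g = c} ≤ ∑ g ∈ {g ∈ D | w g = c}, v c g := by
          rw [card_eq_sum_ones]
          refine sum_le_sum fun g hg => ?_
          obtain ⟨hgD, rfl⟩ := mem_filter.1 hg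
          exact Nat.one_le_iff_ne_zero.2 (hw g hgD)
      _ ≤ vsum v c univ := sum_le_sum_of_subset (subset_univ _)
  obtain ⟨ρ, hρ⟩ : ∃ ρ : Finpartition (univ : Finset G),
      pdem v 2 + #P ≤ ∑ C ∈ ρ.parts, V2 v univ C := by
    refine exists_pdem_two_add_card_le_sum_V2 hv hdisj (fun p hp g hg => ?_) fun p hp => ?_
    · rw [(mem_filter.1 ((hP p hp).1 hg)).2]; exact one_lt_two
    · obtain ⟨hpD, x, hx, y, hy, hxy⟩ := hP p hp
      exact le_V2_of_ne (mem_univ _) (mem_univ _) hxy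
        (one_le_vsum hx (hw x (hpD hx))) (one_le_vsum hy (hw y (hpD hy)))
  have := hrev ρ
  omega

/-- every revenue-maximizing partition has social welfare at
least `(p¹ + p²)/(3·|G|)`. -/
theorem revmax_sw_ge_p1_p2_third [Nonempty B] [Nonempty G]
    (v : B → G → ℕ) (hv : ∀ b g, v b g ≤ 1)
    (π : Finpartition (univ : Finset G))
    (hmax : ∀ π' : Finpartition (univ : Finset G), rev1 v π' ≤ rev1 v π) :
    ((pdem v 1 : ℚ) + (pdem v 2 : ℚ)) / (3 * (Fintype.card G : ℚ)) ≤ SW1 v π := by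
  have hG : (0 : ℚ) < Fintype.card G := by exact_mod_cast Fintype.card_pos
  set T := ∑ C ∈ π.parts, V1 v univ C
  have hrev : ∀ ρ : Finpartition (univ : Finset G), ∑ C ∈ ρ.parts, V2 v univ C ≤ T := by
    intro ρ
    have h := hmax ρ
    rw [rev1, rev1, mul_le_mul_iff_right₀ (inv_pos.2 hG)] at h
    have h' : ∑ C ∈ ρ.parts, V2 v univ C ≤ ∑ C ∈ π.parts, V2 v univ C := by exact_mod_cast h
    exact h'.trans (sum_le_sum fun C _ => V2_le_V1 v univ C)
  have hkey : pdem v 1 + pdem v 2 ≤ 3 * T :=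
    pdem_one_add_pdem_two_le hv hrev fun b => vsum_le_sum_V1 v (mem_univ b) π
  have hSW : SW1 v π = T / Fintype.card G := by rw [SW1, inv_mul_eq_div, Nat.cast_sum]
  rw [hSW, div_le_div_iff₀ (by positivity) hG]
  calc ((pdem v 1 : ℚ) + pdem v 2) * Fintype.card G ≤ 3 * T * Fintype.card G := by
        gcongr; exact_mod_cast hkey
    _ = T * (3 * Fintype.card G) := by ring
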